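/- For every natural number r with 1 ≤ r ≤ 6, there is no r-regular K3-irregular simple graph (on at least two vertices). -/

import Mathlib

/-!
Write `t v` for the triangle-degree and `e(S, T)` for the number of ordered adjacent pairs in
`S × T`, so that `2 t v = e(N v, N v)`. Let `G` be `r`-regular on `n` vertices with all `t v`
distinct.

* A neighbour `w` of `u` adjacent to all other neighbours of `u` has the same closed neighbourhood,
  hence `t w = t u`; so no such `w` exists, and by pigeonhole `2 t u ≤ r (r - 2)`.
* Counting degrees on both sides of the closed neighbourhood `N[v]` gives
  `e(B, B) + r² = m r + r + 2 t v` for the `m = n - r - 1` non-neighbours `B` of `v`,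
  with `0 ≤ e(B, B) ≤ m (m - 1)`; equality makes `B` a clique, all of whose vertices then have
  `t ≥ C(m - 1, 2)`.
* The `n` distinct values `t v` span an interval of length at least `n - 1`. Applied to a vertex of
  minimal and one of maximal triangle-degree, these bounds are incompatible for `r ≤ 6`.
-/

/-- The `K₃`-degree (triangle-degree) of a vertex `v` in a finite simple graph `G`:
the number of triangles (3-cliques) of `G` containing `v`. -/
def K3deg {V : Type*} (G : SimpleGraph V) [Fintype V] [DecidableEq V] [DecidableRel G.Adj]
    (v : V) : ℕ :=
  ((G.cliqueFinset 3).filter (fun t => v ∈ t)).card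

open Finset

theorem Function.Injective.exists_card_add_le_add_one {α : Type*} [Fintype α] [Nonempty α]
    {f : α → ℕ} (hf : Function.Injective f) : ∃ a b, Fintype.card α + f a ≤ f b + 1 := by
  obtain ⟨a, -, ha⟩ := univ.exists_min_image f univ_nonempty
  obtain ⟨b, -, hb⟩ := univ.exists_max_image f univ_nonempty
  have hcard := card_le_card_of_injOn f (s := univ) (t := Icc (f a) (f b))
    (fun x _ => mem_Icc.2 ⟨ha x (mem_univ x), hb x (mem_univ x)⟩) hf.injOn
  rw [card_univ, Nat.card_Icc] at hcard
  exact ⟨a, b, by have := ha b (mem_univ b); omega⟩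

namespace SimpleGraph

section Interedges

variable {V : Type*} (G : SimpleGraph V) [DecidableRel G.Adj]

theorem card_interedges_comm (s t : Finset V) :
    #(G.interedges s t) = #(G.interedges t s) :=
  have := G.symm
  Rel.card_interedges_comm s t

theorem card_interedges_eq_sum (s t : Finset V) :
    #(G.interedges s t) = ∑ a ∈ s, #{b ∈ t | G.Adj a b} := by
  simp only [interedges_def, card_filter, sum_product]

theorem interedges_self_subset_offDiag (s : Finset V) : G.interedges s s ⊆ s.offDiag := by
  intro p hp
  rw [mem_interedges_iff] at hp
  exact mem_offDiag.2 ⟨hp.1, hp.2.1, hp.2.2.ne⟩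

theorem card_interedges_self_le (s : Finset V) : #(G.interedges s s) ≤ #s * (#s - 1) := by
  simpa [offDiag_card, Nat.mul_sub_one] using card_le_card (G.interedges_self_subset_offDiag s)

theorem isClique_iff_interedges_self_eq_offDiag {s : Finset V} :
    G.IsClique (s : Set V) ↔ G.interedges s s = s.offDiag := by
  refine ⟨fun h => ?_, fun h a ha b hb hab => ?_⟩
  · ext ⟨a, b⟩
    simp only [mk_mem_interedges_iff, mem_offDiag]
    exact ⟨fun ⟨ha, hb, hab⟩ => ⟨ha, hb, hab.ne⟩, fun ⟨ha, hb, hab⟩ => ⟨ha, hb, h ha hb hab⟩⟩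
  · have : (a, b) ∈ G.interedges s s := h ▸ mem_offDiag.2 ⟨ha, hb, hab⟩
    exact (G.mk_mem_interedges_iff.1 this).2.2

theorem isClique_iff_card_interedges_self {s : Finset V} :
    G.IsClique (s : Set V) ↔ #(G.interedges s s) = #s * (#s - 1) := by
  rw [isClique_iff_interedges_self_eq_offDiag, Nat.mul_sub_one, ← offDiag_card]
  exact ⟨fun h => h ▸ rfl,
    fun h => eq_of_subset_of_card_le (G.interedges_self_subset_offDiag s) h.ge⟩

theorem card_interedges_insert_self [DecidableEq V] {a : V} {s : Finset V} (ha : a ∉ s) :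
    #(G.interedges (insert a s) (insert a s)) =
      #(G.interedges s s) + 2 * #{b ∈ s | G.Adj a b} := by
  rw [card_interedges_eq_sum, card_interedges_eq_sum, sum_insert ha, filter_insert,
    if_neg (G.irrefl)]
  have hrow : ∀ x ∈ s, #{b ∈ insert a s | G.Adj x b} =
      #{b ∈ s | G.Adj x b} + if G.Adj a x then 1 else 0 := by
    intro x hx
    rw [filter_insert]
    split_ifs <;> simp_all [G.adj_comm]
  rw [sum_congr rfl hrow, sum_add_distrib, ← card_filter]
  ring

end Interedges

variable {V : Type*} [Fintype V] [DecidableEq V] (G : SimpleGraph V) [DecidableRel G.Adj]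

section Regular

variable {G} {r : ℕ}

theorem IsRegularOfDegree.card_interedges_self_add_compl (hreg : G.IsRegularOfDegree r)
    (s : Finset V) : #(G.interedges s s) + #(G.interedges s sᶜ) = #s * r := by
  rw [card_interedges_eq_sum, card_interedges_eq_sum, ← sum_add_distrib, ← smul_eq_mul,
    ← sum_const]
  refine sum_congr rfl fun a _ => ?_
  rw [← card_union_of_disjoint (disjoint_filter_filter disjoint_compl_right), ← filter_union,
    union_compl, ← neighborFinset_eq_filter, card_neighborFinset_eq_degree, hreg a]

theorem IsRegularOfDegree.card_interedges_compl_self (hreg : G.IsRegularOfDegree r)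
    (s : Finset V) :
    #(G.interedges sᶜ sᶜ) + #s * r = #sᶜ * r + #(G.interedges s s) := by
  have hs := hreg.card_interedges_self_add_compl s
  have hsc := hreg.card_interedges_self_add_compl sᶜ
  rw [compl_compl, card_interedges_comm G sᶜ s] at hsc
  omega

end Regular

def nonNeighborFinset (v : V) : Finset V := (insert v (G.neighborFinset v))ᶜ

theorem card_nonNeighborFinset_add {r : ℕ} (hreg : G.IsRegularOfDegree r) (v : V) :
    #(G.nonNeighborFinset v) + (r + 1) = Fintype.card V := by
  have hN : #(insert v (G.neighborFinset v)) = r + 1 := by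
    rw [card_insert_of_notMem (notMem_neighborFinset_self G v), card_neighborFinset_eq_degree,
      hreg v]
  rw [nonNeighborFinset, card_compl, hN]
  have := card_le_univ (insert v (G.neighborFinset v))
  omega

theorem filter_interedges_neighborFinset_eq_offDiag {v : V} {t : Finset V}
    (ht : G.IsNClique 3 t) (hv : v ∈ t) :
    {p ∈ G.interedges (G.neighborFinset v) (G.neighborFinset v) | insert v {p.1, p.2} = t} =
      (t.erase v).offDiag := by
  ext ⟨a, b⟩
  simp only [mem_filter, mk_mem_interedges_iff, mem_neighborFinset, mem_offDiag, mem_erase]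
  constructor
  · rintro ⟨⟨hva, hvb, hab⟩, rfl⟩
    exact ⟨⟨hva.ne', by simp⟩, ⟨hvb.ne', by simp⟩, hab.ne⟩
  · rintro ⟨⟨hav, hat⟩, ⟨hbv, hbt⟩, hab⟩
    have hsub : {a, b} ⊆ t.erase v :=
      insert_subset (mem_erase.2 ⟨hav, hat⟩) (singleton_subset_iff.2 (mem_erase.2 ⟨hbv, hbt⟩))
    have hpair : {a, b} = t.erase v := eq_of_subset_of_card_le hsub
      (by rw [card_erase_of_mem hv, ht.card_eq, card_pair hab])
    have hclique := ht.isClique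
    refine ⟨⟨hclique hv hat hav.symm, hclique hv hbt hbv.symm, hclique hat hbt hab⟩, ?_⟩
    rw [hpair, insert_erase hv]

theorem two_mul_K3deg (v : V) :
    2 * K3deg G v = #(G.interedges (G.neighborFinset v) (G.neighborFinset v)) := by
  have hmaps : ∀ p ∈ G.interedges (G.neighborFinset v) (G.neighborFinset v),
      insert v {p.1, p.2} ∈ {t ∈ G.cliqueFinset 3 | v ∈ t} := by
    intro p hp
    simp only [mem_interedges_iff, mem_neighborFinset] at hp
    simp [is3Clique_triple_iff, hp]
  rw [card_eq_sum_card_fiberwise hmaps, K3deg, mul_comm, ← smul_eq_mul, ← sum_const]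
  refine sum_congr rfl fun t ht => ?_
  rw [mem_filter, mem_cliqueFinset_iff] at ht
  rw [G.filter_interedges_neighborFinset_eq_offDiag ht.1 ht.2, offDiag_card,
    card_erase_of_mem ht.2, ht.1.card_eq]

theorem card_interedges_nonNeighborFinset {r : ℕ} (hreg : G.IsRegularOfDegree r) (v : V) :
    #(G.interedges (G.nonNeighborFinset v) (G.nonNeighborFinset v)) + r * r =
      #(G.nonNeighborFinset v) * r + r + 2 * K3deg G v := by
  have h := hreg.card_interedges_compl_self (insert v (G.neighborFinset v))
  have hv : {b ∈ G.neighborFinset v | G.Adj v b} = G.neighborFinset v :=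
    filter_true_of_mem fun b hb => (G.mem_neighborFinset v b).1 hb
  rw [card_interedges_insert_self _ (notMem_neighborFinset_self G v), hv, ← two_mul_K3deg,
    card_insert_of_notMem (notMem_neighborFinset_self G v), card_neighborFinset_eq_degree,
    hreg v] at h
  rw [nonNeighborFinset]
  linarith

theorem two_mul_K3deg_of_neighborFinset_eq_insert {u w : V} {s : Finset V}
    (h : G.neighborFinset u = insert w s) (hw : w ∉ s) (hs : s ⊆ G.neighborFinset w) :
    2 * K3deg G u = #(G.interedges s s) + 2 * #s := by
  rw [two_mul_K3deg, h, card_interedges_insert_self _ hw,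
    filter_true_of_mem fun b hb => (G.mem_neighborFinset w b).1 (hs hb)]

theorem K3deg_eq_of_erase_neighborFinset_eq {u w : V} (hadj : G.Adj u w)
    (h : (G.neighborFinset u).erase w = (G.neighborFinset w).erase u) :
    K3deg G u = K3deg G w := by
  have hu := G.two_mul_K3deg_of_neighborFinset_eq_insert
    (insert_erase ((G.mem_neighborFinset u w).2 hadj)).symm (notMem_erase w _)
    (h ▸ erase_subset u _)
  have hw := G.two_mul_K3deg_of_neighborFinset_eq_insert
    (insert_erase ((G.mem_neighborFinset w u).2 hadj.symm)).symm (notMem_erase u _)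
    (h ▸ erase_subset w _)
  rw [← h] at hw
  omega

theorem exists_erase_subset_neighborFinset {s : Finset V}
    (h : #s * (#s - 2) < #(G.interedges s s)) : ∃ a ∈ s, s.erase a ⊆ G.neighborFinset a := by
  rw [card_interedges_eq_sum, ← smul_eq_mul, ← sum_const] at h
  obtain ⟨a, ha, hlt⟩ := exists_lt_of_sum_lt h
  have hsub : {b ∈ s | G.Adj a b} ⊆ s.erase a := fun b hb =>
    mem_erase.2 ⟨(G.ne_of_adj (mem_filter.1 hb).2).symm, (mem_filter.1 hb).1⟩
  have heq := eq_of_subset_of_card_le hsub (by rw [card_erase_of_mem ha]; omega)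
  refine ⟨a, ha, fun b hb => ?_⟩
  rw [← heq] at hb
  exact (G.mem_neighborFinset a b).2 (mem_filter.1 hb).2

theorem two_mul_K3deg_le_of_injective {r : ℕ} (hreg : G.IsRegularOfDegree r)
    (hK3 : Function.Injective (K3deg G)) (u : V) : 2 * K3deg G u ≤ r * (r - 2) := by
  by_contra! hlt
  have hN : #(G.neighborFinset u) = r := hreg u
  rw [two_mul_K3deg, ← hN] at hlt
  obtain ⟨w, hw, hsub⟩ := G.exists_erase_subset_neighborFinset hlt
  have hadj : G.Adj u w := (G.mem_neighborFinset u w).1 hw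
  have herase : (G.neighborFinset u).erase w = (G.neighborFinset w).erase u := by
    refine eq_of_subset_of_card_le (fun x hx => mem_erase.2 ⟨?_, hsub hx⟩) ?_
    · exact (G.ne_of_adj ((G.mem_neighborFinset u x).1 (mem_of_mem_erase hx))).symm
    · rw [card_erase_of_mem hw, card_erase_of_mem ((G.mem_neighborFinset w u).2 hadj.symm),
        card_neighborFinset_eq_degree, hreg w, hN]
  exact hadj.ne (hK3 (G.K3deg_eq_of_erase_neighborFinset_eq hadj herase))

variable {G} in
theorem IsClique.sub_one_mul_sub_two_le_two_mul_K3deg {s : Finset V}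
    (hs : G.IsClique (s : Set V)) {w : V} (hw : w ∈ s) :
    (#s - 1) * (#s - 2) ≤ 2 * K3deg G w := by
  have hclique : G.IsClique ((s.erase w : Finset V) : Set V) :=
    hs.subset (by simp)
  have hsub : s.erase w ⊆ G.neighborFinset w := fun x hx =>
    (G.mem_neighborFinset w x).2 (hs hw (mem_of_mem_erase hx) (ne_of_mem_erase hx).symm)
  rw [two_mul_K3deg]
  calc (#s - 1) * (#s - 2) = #(G.interedges (s.erase w) (s.erase w)) := by
        rw [(G.isClique_iff_card_interedges_self).1 hclique, card_erase_of_mem hw]; rfl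
    _ ≤ _ := card_le_card (interedges_mono G hsub hsub)

theorem card_add_le_of_isClique {s : Finset V} (hs : G.IsClique (s : Set V))
    (hK3 : Set.InjOn (K3deg G) s) {U : ℕ} (hU : ∀ v ∈ s, 2 * K3deg G v ≤ U) :
    #s + (#s - 1) * (#s - 2) / 2 ≤ U / 2 + 1 := by
  obtain rfl | ⟨w, hw⟩ := s.eq_empty_or_nonempty
  · simp
  have hmem : ∀ x ∈ s, K3deg G x ∈ Icc ((#s - 1) * (#s - 2) / 2) (U / 2) := fun x hx => by
    have := hs.sub_one_mul_sub_two_le_two_mul_K3deg hx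
    have := hU x hx
    exact mem_Icc.2 ⟨by omega, by omega⟩
  have hcard := card_le_card_of_injOn _ hmem hK3
  have := mem_Icc.1 (hmem w hw)
  rw [Nat.card_Icc] at hcard
  omega

end SimpleGraph

theorem seven_le_of_triangle_counts {r m t₁ t₂ e₁ e₂ : ℕ} (hn : 2 ≤ m + r + 1)
    (hspread : m + r + 1 + t₁ ≤ t₂ + 1) (ht₂ : 2 * t₂ ≤ r * (r - 2))
    (he₁ : e₁ + r * r = m * r + r + 2 * t₁) (he₂ : e₂ + r * r = m * r + r + 2 * t₂)
    (he₂_le : e₂ ≤ m * (m - 1))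
    (hclique : e₂ = m * (m - 1) → m + (m - 1) * (m - 2) / 2 ≤ r * (r - 2) / 2 + 1) :
    7 ≤ r := by
  by_contra! hr
  interval_cases r <;> (have hm : m ≤ 6 := by omega) <;> interval_cases m <;> omega

theorem stmt14_general (r : ℕ) (hr6 : r ≤ 6) :
    ∀ (V : Type*) [Fintype V] [DecidableEq V] (G : SimpleGraph V) [DecidableRel G.Adj],
      2 ≤ Fintype.card V → G.IsRegularOfDegree r →
      ¬ (∀ u w : V, K3deg G u = K3deg G w → u = w) := by
  intro V _ _ G _ hcard hreg hinj
  have hK3 : Function.Injective (K3deg G) := fun u w h => hinj u w h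
  have : Nonempty V := Fintype.card_pos_iff.mp (by omega)
  obtain ⟨v₁, v₂, hspread⟩ := hK3.exists_card_add_le_add_one
  have hU := G.two_mul_K3deg_le_of_injective hreg hK3
  have hm₁ := G.card_nonNeighborFinset_add hreg v₁
  have hm₂ := G.card_nonNeighborFinset_add hreg v₂
  have he₁ := G.card_interedges_nonNeighborFinset hreg v₁
  rw [show #(G.nonNeighborFinset v₁) = #(G.nonNeighborFinset v₂) by omega] at he₁
  have hclique := fun h => G.card_add_le_of_isClique
    ((G.isClique_iff_card_interedges_self (s := G.nonNeighborFinset v₂)).2 h) hK3.injOn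
    (fun v _ => hU v)
  have := seven_le_of_triangle_counts (by omega) (by omega) (hU v₂) he₁
    (G.card_interedges_nonNeighborFinset hreg v₂) (G.card_interedges_self_le _) hclique
  omega

theorem stmt14 (r : ℕ) (hr1 : 1 ≤ r) (hr6 : r ≤ 6) :
    ∀ (V : Type*) [Fintype V] [DecidableEq V] (G : SimpleGraph V) [DecidableRel G.Adj],
      2 ≤ Fintype.card V → G.IsRegularOfDegree r →
      ¬ (∀ u w : V, K3deg G u = K3deg G w → u = w) :=
  stmt14_general r hr6
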